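/- arXiv:1204.6717 — 5 statements merged into one kernel-verified Lean document; each statement's English description precedes it below -/
import Mathlib

section
/- Let H be an axis-parallel hyperbox in R^j with center o and side lengths a_1,...,a_j. Let ρ_1,...,ρ_j be points such that ρ_i lies on the facet of H orthogonal to the i-th coordinate direction (i.e., the i-th coordinate of ρ_i - o equals a_i/2 in absolute value, and all other coordinates of ρ_i - o are bounded by a_w/2 in absolute value). Then there exists an index l_0 such that the slab {x : |<x - o, u>| ≤ √j · |<ρ_{l_0} - o, u>|}, where u = (ρ_{l_0} - o)/||ρ_{l_0} - o||, contains H; equivalently, every point t of H satisfies |<t - o, ρ_{l_0} - o>| ≤ √j · ||ρ_{l_0} - o||². -/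
/-!
Take `l₀` with the longest side `a l₀`. Every coordinate of `t - o` is at most `a l₀ / 2`
in absolute value, and `a l₀ / 2 = |(ρ l₀ - o) l₀| ≤ ‖ρ l₀ - o‖`; hence
`‖t - o‖ ≤ √j · ‖ρ l₀ - o‖`, and Cauchy–Schwarz concludes.
-/

open scoped RealInnerProductSpace

namespace EuclideanSpace

variable {ι : Type*} [Fintype ι]

theorem norm_le_sqrt_card_mul {x : EuclideanSpace ℝ ι} {C : ℝ} (hC : 0 ≤ C)
    (hx : ∀ i, |x i| ≤ C) : ‖x‖ ≤ √(Fintype.card ι) * C := by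
  rw [norm_eq, ← Real.sqrt_sq hC, ← Real.sqrt_mul (Nat.cast_nonneg _)]
  gcongr
  calc ∑ i, ‖x i‖ ^ 2 ≤ ∑ _i : ι, C ^ 2 := by
        gcongr with i
        exact (Real.norm_eq_abs _).trans_le (hx i)
    _ = Fintype.card ι * C ^ 2 := by simp

theorem abs_inner_le_sqrt_card_mul_norm_sq {x y : EuclideanSpace ℝ ι}
    (hx : ∀ i, |x i| ≤ ‖y‖) : |⟪x, y⟫| ≤ √(Fintype.card ι) * ‖y‖ ^ 2 :=
  calc |⟪x, y⟫| ≤ ‖x‖ * ‖y‖ := abs_real_inner_le_norm x y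
    _ ≤ (√(Fintype.card ι) * ‖y‖) * ‖y‖ := by
        gcongr
        exact norm_le_sqrt_card_mul (norm_nonneg y) hx
    _ = √(Fintype.card ι) * ‖y‖ ^ 2 := by ring

end EuclideanSpace

theorem hyperbox_lemma_general (j : ℕ) (hj : 0 < j)
    (o : EuclideanSpace ℝ (Fin j)) (a : Fin j → ℝ)
    (ρ : Fin j → EuclideanSpace ℝ (Fin j))
    (hincident : ∀ i : Fin j, |ρ i i - o i| = a i / 2) :
    ∃ l₀ : Fin j, ∀ t : EuclideanSpace ℝ (Fin j),
      (∀ w : Fin j, |t w - o w| ≤ a w / 2) →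
      |⟪t - o, ρ l₀ - o⟫| ≤ Real.sqrt j * ‖ρ l₀ - o‖ ^ 2 := by
  have : Nonempty (Fin j) := ⟨⟨0, hj⟩⟩
  obtain ⟨l₀, hl₀⟩ := Finite.exists_max a
  refine ⟨l₀, fun t ht => ?_⟩
  have half_side_le : a l₀ / 2 ≤ ‖ρ l₀ - o‖ := by
    simpa only [← hincident l₀, Real.norm_eq_abs, PiLp.sub_apply] using PiLp.norm_apply_le (ρ l₀ - o) l₀
  simpa only [Fintype.card_fin] using
    EuclideanSpace.abs_inner_le_sqrt_card_mul_norm_sq (x := t - o) (y := ρ l₀ - o)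
      fun w => (ht w).trans <| by linarith [hl₀ w]

/-- Hyperbox Lemma: if `H` is an axis-parallel hyperbox in `ℝ^j` centered at `o`
with side lengths `a_1, …, a_j`, and `ρ_i` is a point on the facet of `H`
orthogonal to the `i`-th coordinate direction, then some `ρ_{l₀}` satisfies:
every point `t` of `H` has `|⟪t - o, ρ_{l₀} - o⟫| ≤ √j · ‖ρ_{l₀} - o‖²`, i.e. the
slab determined by `ρ_{l₀} - o` amplified by `√j` contains `H`. -/
theorem hyperbox_lemma (j : ℕ) (hj : 0 < j)
    (o : EuclideanSpace ℝ (Fin j)) (a : Fin j → ℝ) (ha : ∀ i, 0 < a i)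
    (ρ : Fin j → EuclideanSpace ℝ (Fin j))
    (hincident : ∀ i : Fin j, |ρ i i - o i| = a i / 2)
    (hbound : ∀ i w : Fin j, |ρ i w - o w| ≤ a w / 2) :
    ∃ l₀ : Fin j, ∀ t : EuclideanSpace ℝ (Fin j),
      (∀ w : Fin j, |t w - o w| ≤ a w / 2) →
      |⟪t - o, ρ l₀ - o⟫| ≤ Real.sqrt j * ‖ρ l₀ - o‖ ^ 2 :=
  hyperbox_lemma_general j hj o a ρ hincident
end

section
/- Let P be a finite set of points in R^d, F a j-dimensional affine flat, o a point on F, and u a point in R^d with projection Proj(u) onto F distinct from o. Define u_p = |<p - o, (Proj(u)-o)/||Proj(u)-o||>| for each p ∈ P, and h² = (1/|P|)·Σ_{p∈P} u_p². Let F' be the flat obtained by rotating F about the (j-1)-dimensional subflat through o orthogonal (within F) to Proj(u)-o, by an angle θ with tan θ ≤ Δ/h, for some Δ > 0. Then, setting δ_{P,F}² = (1/|P|)·Σ_{p∈P} dist(p, F)² and similarly for F', one has δ_{P,F'} ≤ δ_{P,F} + Δ. -/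
open Finset Metric
open scoped RealInnerProductSpace

/-!
Let `e` and `f` be the unit vectors along `Proj(u) - o` and `u - o`. The rotation moves a point
`q ∈ F` to `q + ⟪q - o, e⟫ • (f - e) ∈ F'`. For the foot `q` of `p` on `F` we have
`⟪q - o, e⟫ = ⟪p - o, e⟫`, hence `dist(p, F') ≤ dist(p, F) + u_p ‖f - e‖`, and
`‖f - e‖ = 2 sin (θ/2) ≤ tan θ`. Minkowski's inequality for root mean squares then gives
`δ_{P,F'} ≤ δ_{P,F} + h tan θ ≤ δ_{P,F} + Δ`.
-/

lemma Real.sqrt_sum_add_sq_le {ι : Type*} (s : Finset ι) (f g : ι → ℝ) :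
    √(∑ i ∈ s, (f i + g i) ^ 2) ≤ √(∑ i ∈ s, f i ^ 2) + √(∑ i ∈ s, g i ^ 2) := by
  have hf : √(∑ i ∈ s, f i ^ 2) ^ 2 = _ := Real.sq_sqrt (by positivity)
  have hg : √(∑ i ∈ s, g i ^ 2) ^ 2 = _ := Real.sq_sqrt (by positivity)
  have hfg := Real.sum_mul_le_sqrt_mul_sqrt s f g
  have hexpand : ∑ i ∈ s, (f i + g i) ^ 2
      = ∑ i ∈ s, f i ^ 2 + 2 * ∑ i ∈ s, f i * g i + ∑ i ∈ s, g i ^ 2 := by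
    simp only [add_sq, sum_add_distrib, mul_sum, mul_assoc]
  rw [Real.sqrt_le_iff, hexpand]
  exact ⟨by positivity, by nlinarith⟩

/-- The root mean square of `f` over `P`, so that `δ_{P,F} = rms P (infDist · F)`. -/
noncomputable def rms {α : Type*} (P : Finset α) (f : α → ℝ) : ℝ :=
  √((∑ p ∈ P, f p ^ 2) / P.card)

section rms

variable {α : Type*} (P : Finset α)

lemma rms_mono {f g : α → ℝ} (hf : ∀ p ∈ P, 0 ≤ f p) (hfg : ∀ p ∈ P, f p ≤ g p) :
    rms P f ≤ rms P g := by
  unfold rms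
  gcongr with p hp
  · exact hf p hp
  · exact hfg p hp

lemma rms_add_le (f g : α → ℝ) : rms P (fun p => f p + g p) ≤ rms P f + rms P g := by
  simp only [rms, Real.sqrt_div (sum_nonneg fun p _ => sq_nonneg _), ← add_div]
  gcongr
  exact Real.sqrt_sum_add_sq_le P f g

lemma rms_const_mul (c : ℝ) (f : α → ℝ) : rms P (fun p => c * f p) = |c| * rms P f := by
  simp only [rms, mul_pow, ← mul_sum, mul_div_assoc]
  rw [Real.sqrt_mul (sq_nonneg c), Real.sqrt_sq_eq_abs]

end rms

lemma Real.two_sub_two_mul_cos_le_tan_sq {θ : ℝ} (h : 0 < Real.cos θ) :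
    2 - 2 * Real.cos θ ≤ Real.tan θ ^ 2 := by
  rw [Real.tan_eq_sin_div_cos, div_pow, le_div_iff₀ (by positivity), Real.sin_sq]
  nlinarith [mul_nonneg (sq_nonneg (1 - Real.cos θ)) h.le]

section InnerProductSpace

variable {E : Type*} [NormedAddCommGroup E] [InnerProductSpace ℝ E]

open InnerProductGeometry in
lemma norm_normalize_sub_normalize_le_tan_angle {x y : E} (h : 0 < ⟪x, y⟫) :
    ‖‖x‖⁻¹ • x - ‖y‖⁻¹ • y‖ ≤ Real.tan (angle x y) := by
  have hx : x ≠ 0 := by rintro rfl; simp at h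
  have hy : y ≠ 0 := by rintro rfl; simp at h
  have hcos : Real.cos (angle x y) = ⟪‖x‖⁻¹ • x, ‖y‖⁻¹ • y⟫ := by
    rw [cos_angle, real_inner_smul_left, real_inner_smul_right]
    field_simp
  have hcos_pos : 0 < Real.cos (angle x y) := by
    rw [cos_angle]; positivity
  have htan_nonneg : 0 ≤ Real.tan (angle x y) := by
    rw [Real.tan_eq_sin_div_cos]; exact div_nonneg (sin_angle_nonneg x y) hcos_pos.le
  refine le_of_sq_le_sq ?_ htan_nonneg
  rw [norm_sub_sq_real, ← hcos]
  simp only [norm_smul, norm_inv, norm_norm, inv_mul_cancel₀ (norm_ne_zero_iff.2 hx),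
    inv_mul_cancel₀ (norm_ne_zero_iff.2 hy)]
  linarith [Real.two_sub_two_mul_cos_le_tan_sq hcos_pos]

/-- Rotating the direction `e` of `K` to `f` sends `x ∈ K` to `x + ⟪x, e⟫ • (f - e)`. -/
lemma add_inner_smul_sub_mem_sup_inf_orthogonal {K : Submodule ℝ E} {e x : E} (he : e ∈ K)
    (he1 : ‖e‖ = 1) (hx : x ∈ K) (f : E) :
    x + ⟪x, e⟫ • (f - e) ∈ Submodule.span ℝ {f} ⊔ (K ⊓ (Submodule.span ℝ {e})ᗮ) := by
  have hsplit : x + ⟪x, e⟫ • (f - e) = ⟪x, e⟫ • f + (x - ⟪x, e⟫ • e) := by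
    rw [smul_sub]; abel
  rw [hsplit]
  refine Submodule.add_mem_sup (Submodule.smul_mem _ _ (Submodule.mem_span_singleton_self f)) ?_
  refine ⟨K.sub_mem hx (K.smul_mem _ he), ?_⟩
  rw [SetLike.mem_coe, Submodule.mem_orthogonal_singleton_iff_inner_right, inner_sub_right,
    real_inner_smul_right, real_inner_self_eq_norm_sq, he1, real_inner_comm]
  ring

noncomputable def AffineSubspace.rotate (F : AffineSubspace ℝ E) (o w v : E) :
    AffineSubspace ℝ E :=
  AffineSubspace.mk' o (Submodule.span ℝ {v} ⊔ (F.direction ⊓ (Submodule.span ℝ {w})ᗮ))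

lemma AffineSubspace.rotate_smul (F : AffineSubspace ℝ E) (o w v : E) {a b : ℝ} (ha : a ≠ 0)
    (hb : b ≠ 0) : F.rotate o (a • w) (b • v) = F.rotate o w v := by
  simp only [rotate, Submodule.span_singleton_smul_eq (IsUnit.mk0 _ ha),
    Submodule.span_singleton_smul_eq (IsUnit.mk0 _ hb)]

lemma AffineSubspace.infDist_rotate_le (F : AffineSubspace ℝ E)
    [F.direction.HasOrthogonalProjection] {o e : E} (ho : o ∈ F) (he : e ∈ F.direction)
    (he1 : ‖e‖ = 1) (f p : E) :
    infDist p (F.rotate o e f) ≤ infDist p F + ‖f - e‖ * |⟪p - o, e⟫| := by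
  have : Nonempty F := ⟨⟨o, ho⟩⟩
  set q : E := (EuclideanGeometry.orthogonalProjection F p : E)
  have hq : q ∈ F := EuclideanGeometry.orthogonalProjection_mem p
  have hpq : ⟪p - q, e⟫ = 0 := Submodule.inner_left_of_mem_orthogonal he
    (EuclideanGeometry.vsub_orthogonalProjection_mem_direction_orthogonal F p)
  have hqo : ⟪q - o, e⟫ = ⟪p - o, e⟫ := by
    rw [← sub_add_sub_cancel p q o, inner_add_left, hpq, zero_add]
  have hmem : q + ⟪p - o, e⟫ • (f - e) ∈ F.rotate o e f := by
    rw [rotate, AffineSubspace.mem_mk', vsub_eq_sub, add_sub_right_comm, ← hqo]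
    exact add_inner_smul_sub_mem_sup_inf_orthogonal he he1 (vsub_mem_direction hq ho) f
  calc infDist p (F.rotate o e f) ≤ dist p (q + ⟪p - o, e⟫ • (f - e)) :=
        infDist_le_dist_of_mem hmem
    _ ≤ dist p q + ‖⟪p - o, e⟫ • (f - e)‖ := (dist_triangle _ q _).trans_eq
        (by rw [dist_self_add_right])
    _ = infDist p F + ‖f - e‖ * |⟪p - o, e⟫| := by
        rw [EuclideanGeometry.dist_orthogonalProjection_eq_infDist, norm_smul, Real.norm_eq_abs,
          mul_comm]

end InnerProductSpace

theorem delta_rotation_lemma_general (d : ℕ)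
    (P : Finset (EuclideanSpace ℝ (Fin d)))
    (F : AffineSubspace ℝ (EuclideanSpace ℝ (Fin d)))
    (o : EuclideanSpace ℝ (Fin d)) (ho : o ∈ F)
    (u pu : EuclideanSpace ℝ (Fin d)) (hpu : pu ∈ F)
    (hproj : ∀ v ∈ F.direction, ⟪u - pu, v⟫ = 0)
    (hne : pu ≠ o)
    (Δ : ℝ) (h : ℝ)
    (hh : h = Real.sqrt ((∑ p ∈ P, |⟪p - o, ‖pu - o‖⁻¹ • (pu - o)⟫| ^ 2) / P.card))
    (hhpos : 0 < h)
    (htan : Real.tan (InnerProductGeometry.angle (u - o) (pu - o)) ≤ Δ / h)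
    (F' : AffineSubspace ℝ (EuclideanSpace ℝ (Fin d)))
    (hF' : F' = AffineSubspace.mk' o
      (Submodule.span ℝ {u - o} ⊔ (F.direction ⊓ (Submodule.span ℝ {pu - o})ᗮ))) :
    Real.sqrt ((∑ p ∈ P, infDist p (F' : Set (EuclideanSpace ℝ (Fin d))) ^ 2) / P.card)
      ≤ Real.sqrt ((∑ p ∈ P, infDist p (F : Set (EuclideanSpace ℝ (Fin d))) ^ 2) / P.card)
        + Δ := by
  set w := pu - o
  set v := u - o
  set T := Real.tan (InnerProductGeometry.angle v w)
  have hw : w ∈ F.direction := AffineSubspace.vsub_mem_direction hpu ho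
  have hw0 : w ≠ 0 := sub_ne_zero.2 hne
  have hvw : ⟪v, w⟫ = ‖w‖ ^ 2 := by
    rw [show v = (u - pu) + w from (sub_add_sub_cancel u pu o).symm, inner_add_left,
      hproj w hw, zero_add, real_inner_self_eq_norm_sq]
  have hv0 : v ≠ 0 := by
    rintro hv
    rw [hv, inner_zero_left] at hvw
    exact hw0 (by simpa using hvw.symm)
  have hF'rot : F' = F.rotate o (‖w‖⁻¹ • w) (‖v‖⁻¹ • v) := by
    rw [hF', AffineSubspace.rotate_smul _ _ _ _ (by simpa using hw0) (by simpa using hv0)]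
    rfl
  have hturn : ‖‖v‖⁻¹ • v - ‖w‖⁻¹ • w‖ ≤ T :=
    norm_normalize_sub_normalize_le_tan_angle (by rw [hvw]; positivity)
  have hpoint (p) : infDist p F' ≤ infDist p F + T * |⟪p - o, ‖w‖⁻¹ • w⟫| := by
    rw [hF'rot]
    refine (F.infDist_rotate_le ho (F.direction.smul_mem _ hw)
      (by simpa using norm_smul_inv_norm (𝕜 := ℝ) hw0) _ p).trans ?_
    gcongr
  change rms P (infDist · F') ≤ rms P (infDist · F) + Δ
  calc rms P (infDist · F') ≤ rms P (fun p => infDist p F + T * |⟪p - o, ‖w‖⁻¹ • w⟫|) :=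
        rms_mono P (fun _ _ => infDist_nonneg) (fun p _ => hpoint p)
    _ ≤ rms P (infDist · F) + T * h := by
        refine (rms_add_le P _ _).trans_eq ?_
        rw [rms_const_mul, abs_of_nonneg ((norm_nonneg _).trans hturn), hh]
        rfl
    _ ≤ rms P (infDist · F) + Δ := by
        gcongr
        exact (le_div_iff₀ hhpos).1 htan

/-- Δ-rotation lemma: let `F` be a `j`-flat through `o`, `pu` the orthogonal
projection of `u` onto `F` (distinct from `o`), `u_p = |⟪p-o, (pu-o)/‖pu-o‖⟫|`,
`h² = (1/|P|)Σ u_p²`, and let `F'` be the flat obtained by rotating `F`: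
replacing the direction `pu - o` by `u - o` while fixing the orthogonal
complement of `pu - o` within the direction of `F`. If the rotation angle `θ`
(between `u - o` and `pu - o`) satisfies `tan θ ≤ Δ/h`, then
`δ_{P,F'} ≤ δ_{P,F} + Δ`. -/
theorem delta_rotation_lemma (d j : ℕ)
    (P : Finset (EuclideanSpace ℝ (Fin d))) (hP : P.Nonempty)
    (F : AffineSubspace ℝ (EuclideanSpace ℝ (Fin d)))
    (hFdim : Module.finrank ℝ F.direction = j)
    (o : EuclideanSpace ℝ (Fin d)) (ho : o ∈ F)
    (u pu : EuclideanSpace ℝ (Fin d)) (hpu : pu ∈ F)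
    (hproj : ∀ v ∈ F.direction, ⟪u - pu, v⟫ = 0)
    (hne : pu ≠ o)
    (Δ : ℝ) (hΔ : 0 < Δ) (h : ℝ)
    (hh : h = Real.sqrt ((∑ p ∈ P, |⟪p - o, ‖pu - o‖⁻¹ • (pu - o)⟫| ^ 2) / P.card))
    (hhpos : 0 < h)
    (htan : Real.tan (InnerProductGeometry.angle (u - o) (pu - o)) ≤ Δ / h)
    (F' : AffineSubspace ℝ (EuclideanSpace ℝ (Fin d)))
    (hF' : F' = AffineSubspace.mk' o
      (Submodule.span ℝ {u - o} ⊔ (F.direction ⊓ (Submodule.span ℝ {pu - o})ᗮ))) :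
    Real.sqrt ((∑ p ∈ P, infDist p (F' : Set (EuclideanSpace ℝ (Fin d))) ^ 2) / P.card)
      ≤ Real.sqrt ((∑ p ∈ P, infDist p (F : Set (EuclideanSpace ℝ (Fin d))) ^ 2) / P.card)
        + Δ :=
  delta_rotation_lemma_general d P F o ho u pu hpu hproj hne Δ h hh hhpos htan F' hF'
end

section
/- Under the hypotheses of the Δ-rotation lemma, for every point p ∈ P the pointwise bound dist(p, F')² ≤ (1 + Δ/δ)·dist(p, F)² + (Δ/δ + (Δ/δ)²)·(δ/h · u_p)² holds, where δ = δ_{P,F} = √((1/|P|)Σ_{q∈P} dist(q,F)²), u_p = |<p - o, (Proj(u)-o)/||Proj(u)-o||>|, and h² = (1/|P|)Σ_{q∈P} u_q². -/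
/-!
Let `y` be the orthogonal projection of `p` onto `F` and `t = ⟪y - o, pu - o⟫ / ‖pu - o‖²`.
The point `y + t • (u - pu)` lies on `F'`: its offset from `o` splits as `t • (u - o)` plus a
vector of `F.direction` orthogonal to `pu - o`. Since `u - pu ⊥ F.direction`, the angle `θ`
between `u - o` and `pu - o` has `tan θ = ‖u - pu‖ / ‖pu - o‖`, so this point is at distance
`u_p · tan θ ≤ u_p · Δ / h` from `y`. Hence `dist(p, F') ≤ dist(p, F) + (Δ/δ)(δ/h · u_p)`, and
squaring with `2ab ≤ a² + b²` gives the bound.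
-/

open Metric InnerProductGeometry
open scoped RealInnerProductSpace

theorem add_mul_sq_le_one_add_mul_sq_add (a b : ℝ) {x : ℝ} (hx : 0 ≤ x) :
    (a + x * b) ^ 2 ≤ (1 + x) * a ^ 2 + (x + x ^ 2) * b ^ 2 := by
  nlinarith [mul_nonneg hx (sq_nonneg (a - b))]

section Rotation

variable {V : Type*} [NormedAddCommGroup V] [InnerProductSpace ℝ V]

/-- The flat through `o` obtained from `F` by turning the direction `pu - o` into `u - o`. -/
noncomputable def rotatedFlat (F : AffineSubspace ℝ V) (o u pu : V) : AffineSubspace ℝ V :=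
  AffineSubspace.mk' o (Submodule.span ℝ {u - o} ⊔ (F.direction ⊓ (Submodule.span ℝ {pu - o})ᗮ))

theorem add_smul_sub_mem_rotatedFlat {F : AffineSubspace ℝ V} {o u pu y : V} (ho : o ∈ F)
    (hpu : pu ∈ F) (hy : y ∈ F) :
    y + (⟪y - o, pu - o⟫ / ‖pu - o‖ ^ 2) • (u - pu) ∈ rotatedFlat F o u pu := by
  set t := ⟪y - o, pu - o⟫ / ‖pu - o‖ ^ 2
  have hw : (y - o) - t • (pu - o) ∈ F.direction :=
    sub_mem (AffineSubspace.vsub_mem_direction hy ho)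
      (Submodule.smul_mem _ _ (AffineSubspace.vsub_mem_direction hpu ho))
  have hw_perp : ⟪(y - o) - t • (pu - o), pu - o⟫ = 0 := by
    rcases eq_or_ne (pu - o) 0 with h0 | h0
    · simp [h0]
    rw [inner_sub_left, real_inner_smul_left, real_inner_self_eq_norm_sq,
      div_mul_cancel₀ _ (pow_ne_zero 2 (norm_ne_zero_iff.mpr h0)), sub_self]
  rw [rotatedFlat, AffineSubspace.mem_mk', vsub_eq_sub,
    show y + t • (u - pu) - o = t • (u - o) + ((y - o) - t • (pu - o)) by module]
  exact Submodule.add_mem_sup (Submodule.smul_mem _ _ (Submodule.mem_span_singleton_self _))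
    ⟨hw, Submodule.mem_orthogonal_singleton_iff_inner_left.mpr hw_perp⟩

theorem tan_angle_sub_eq_norm_div_of_orthogonal {F : AffineSubspace ℝ V} {o u pu : V}
    (ho : o ∈ F) (hpu : pu ∈ F) (hproj : ∀ v ∈ F.direction, ⟪u - pu, v⟫ = 0) :
    Real.tan (angle (u - o) (pu - o)) = ‖u - pu‖ / ‖pu - o‖ := by
  have horth : ⟪pu - o, u - pu⟫ = 0 := by
    rw [real_inner_comm]
    exact hproj _ (AffineSubspace.vsub_mem_direction hpu ho)
  rw [show u - o = (pu - o) + (u - pu) by abel, angle_comm,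
    tan_angle_add_of_inner_eq_zero horth]

theorem infDist_rotatedFlat_le {F : AffineSubspace ℝ V} [Nonempty F]
    [F.direction.HasOrthogonalProjection] {o u pu : V} (ho : o ∈ F) (hpu : pu ∈ F)
    (hproj : ∀ v ∈ F.direction, ⟪u - pu, v⟫ = 0) (p : V) :
    infDist p (rotatedFlat F o u pu : Set V) ≤ infDist p (F : Set V)
      + |⟪p - o, ‖pu - o‖⁻¹ • (pu - o)⟫| * Real.tan (angle (u - o) (pu - o)) := by
  set y : V := (EuclideanGeometry.orthogonalProjection F p : V)
  have hy : y ∈ F := EuclideanGeometry.orthogonalProjection_mem p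
  have hinner : ⟪y - o, pu - o⟫ = ⟪p - o, pu - o⟫ := by
    have : ⟪p - y, pu - o⟫ = 0 := by
      rw [real_inner_comm]
      exact EuclideanGeometry.vsub_orthogonalProjection_mem_direction_orthogonal F p _
        (AffineSubspace.vsub_mem_direction hpu ho)
    rw [show p - o = (p - y) + (y - o) by abel, inner_add_left, this, zero_add]
  have hshift : dist y (y + (⟪y - o, pu - o⟫ / ‖pu - o‖ ^ 2) • (u - pu))
      = |⟪p - o, ‖pu - o‖⁻¹ • (pu - o)⟫| * Real.tan (angle (u - o) (pu - o)) := by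
    rw [tan_angle_sub_eq_norm_div_of_orthogonal ho hpu hproj, dist_self_add_right, norm_smul,
      hinner, real_inner_smul_right, Real.norm_eq_abs, abs_div, abs_mul, abs_inv,
      abs_norm, abs_pow, abs_norm]
    ring
  calc infDist p (rotatedFlat F o u pu : Set V)
      ≤ dist p (y + (⟪y - o, pu - o⟫ / ‖pu - o‖ ^ 2) • (u - pu)) :=
        infDist_le_dist_of_mem (add_smul_sub_mem_rotatedFlat ho hpu hy)
    _ ≤ dist p y + dist y (y + (⟪y - o, pu - o⟫ / ‖pu - o‖ ^ 2) • (u - pu)) :=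
        dist_triangle _ _ _
    _ = _ := by rw [hshift, EuclideanGeometry.dist_orthogonalProjection_eq_infDist]

end Rotation

theorem delta_rotation_pointwise_bound_general (d : ℕ)
    (P : Finset (EuclideanSpace ℝ (Fin d)))
    (F : AffineSubspace ℝ (EuclideanSpace ℝ (Fin d)))
    (o : EuclideanSpace ℝ (Fin d)) (ho : o ∈ F)
    (u pu : EuclideanSpace ℝ (Fin d)) (hpu : pu ∈ F)
    (hproj : ∀ v ∈ F.direction, ⟪u - pu, v⟫ = 0)
    (Δ : ℝ) (hΔ : 0 < Δ) (h δ : ℝ)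
    (hδpos : 0 < δ)
    (htan : Real.tan (InnerProductGeometry.angle (u - o) (pu - o)) ≤ Δ / h)
    (F' : AffineSubspace ℝ (EuclideanSpace ℝ (Fin d)))
    (hF' : F' = AffineSubspace.mk' o
      (Submodule.span ℝ {u - o} ⊔ (F.direction ⊓ (Submodule.span ℝ {pu - o})ᗮ))) :
    ∀ p ∈ P,
      infDist p (F' : Set (EuclideanSpace ℝ (Fin d))) ^ 2
        ≤ (1 + Δ / δ) * infDist p (F : Set (EuclideanSpace ℝ (Fin d))) ^ 2
          + (Δ / δ + (Δ / δ) ^ 2)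
            * ((δ / h) * |⟪p - o, ‖pu - o‖⁻¹ • (pu - o)⟫|) ^ 2 := by
  intro p _
  have : Nonempty F := ⟨⟨o, ho⟩⟩
  set up := |⟪p - o, ‖pu - o‖⁻¹ • (pu - o)⟫|
  have hdist : infDist p (F' : Set _) ≤ infDist p (F : Set _) + Δ / δ * ((δ / h) * up) :=
    calc infDist p (F' : Set _) ≤ infDist p (F : Set _) + up * Real.tan (angle (u - o) (pu - o)) :=
          hF' ▸ infDist_rotatedFlat_le ho hpu hproj p
      _ ≤ infDist p (F : Set _) + up * (Δ / h) := by gcongr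
      _ = infDist p (F : Set _) + Δ / δ * ((δ / h) * up) := by field_simp
  calc infDist p (F' : Set _) ^ 2 ≤ (infDist p (F : Set _) + Δ / δ * ((δ / h) * up)) ^ 2 :=
        pow_le_pow_left₀ infDist_nonneg hdist 2
    _ ≤ _ := add_mul_sq_le_one_add_mul_sq_add _ _ (by positivity)

/-- Pointwise bound in the Δ-rotation lemma: in the Δ-rotation setting, for
every `p ∈ P`,
`dist(p,F')² ≤ (1 + Δ/δ)·dist(p,F)² + (Δ/δ + (Δ/δ)²)·(δ/h · u_p)²`,
where `δ² = (1/|P|)Σ dist(q,F)²`, `u_p = |⟪p-o,(pu-o)/‖pu-o‖⟫|` and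
`h² = (1/|P|)Σ u_q²`. -/
theorem delta_rotation_pointwise_bound (d j : ℕ)
    (P : Finset (EuclideanSpace ℝ (Fin d))) (hP : P.Nonempty)
    (F : AffineSubspace ℝ (EuclideanSpace ℝ (Fin d)))
    (hFdim : Module.finrank ℝ F.direction = j)
    (o : EuclideanSpace ℝ (Fin d)) (ho : o ∈ F)
    (u pu : EuclideanSpace ℝ (Fin d)) (hpu : pu ∈ F)
    (hproj : ∀ v ∈ F.direction, ⟪u - pu, v⟫ = 0)
    (hne : pu ≠ o)
    (Δ : ℝ) (hΔ : 0 < Δ) (h δ : ℝ)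
    (hh : h = Real.sqrt ((∑ q ∈ P, |⟪q - o, ‖pu - o‖⁻¹ • (pu - o)⟫| ^ 2) / P.card))
    (hhpos : 0 < h)
    (hδ : δ = Real.sqrt ((∑ q ∈ P, infDist q (F : Set (EuclideanSpace ℝ (Fin d))) ^ 2) / P.card))
    (hδpos : 0 < δ)
    (htan : Real.tan (InnerProductGeometry.angle (u - o) (pu - o)) ≤ Δ / h)
    (F' : AffineSubspace ℝ (EuclideanSpace ℝ (Fin d)))
    (hF' : F' = AffineSubspace.mk' o
      (Submodule.span ℝ {u - o} ⊔ (F.direction ⊓ (Submodule.span ℝ {pu - o})ᗮ))) :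
    ∀ p ∈ P,
      infDist p (F' : Set (EuclideanSpace ℝ (Fin d))) ^ 2
        ≤ (1 + Δ / δ) * infDist p (F : Set (EuclideanSpace ℝ (Fin d))) ^ 2
          + (Δ / δ + (Δ / δ) ^ 2)
            * ((δ / h) * |⟪p - o, ‖pu - o‖⁻¹ • (pu - o)⟫|) ^ 2 :=
  delta_rotation_pointwise_bound_general d P F o ho u pu hpu hproj Δ hΔ h δ hδpos htan F' hF'
end

section
/- Let P be a finite set of points in R^d, F a j-dimensional flat containing a point o, and u ∈ R^d with projection Proj(u) onto F distinct from o. For an integer τ ≥ 1, define u_p = |<p - o, (Proj(u)-o)/||Proj(u)-o||>|, h^τ = (1/|P|)·Σ_p u_p^τ, and δ = ((1/|P|)·Σ_p dist(p,F)^τ)^{1/τ}. If F' is the rotation of F induced by u - o with angle θ satisfying tan θ ≤ Δ/h for some Δ > 0 (L_τ sense Δ-rotation), then ((1/|P|)·Σ_{p∈P} dist(p,F')^τ)^{1/τ} ≤ δ + Δ. -/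
/-!
Let `w` and `w'` be the unit vectors along `Proj(u) - o` and `u - o`. The rotated flat contains
`q + ⟪q - o, w⟫ (w' - w)` for every `q ∈ F`; taking for `q` the orthogonal projection of `p` onto
`F`, whose coordinate along `w` is that of `p`, gives `dist(p, F') ≤ dist(p, F) + u_p ‖w' - w‖`.
As `⟪u - o, Proj(u) - o⟫ = ‖Proj(u) - o‖² > 0`, the angle `θ` is acute and the chord
`‖w' - w‖ = 2 sin(θ/2)` is at most `tan θ ≤ Δ / h`. Minkowski's inequality for the `L_τ` mean then
turns the pointwise bound into `δ' ≤ δ + h ‖w' - w‖ ≤ δ + Δ`.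
-/

open Finset Metric
open scoped RealInnerProductSpace

open NormedSpace InnerProductGeometry

section Rotation

variable {V : Type*} [NormedAddCommGroup V] [InnerProductSpace ℝ V]

theorem norm_normalize_sub_normalize_le_tan_angle_s11 {x y : V} (hxy : 0 < ⟪x, y⟫) :
    ‖normalize x - normalize y‖ ≤ Real.tan (angle x y) := by
  have hx : x ≠ 0 := by rintro rfl; simp at hxy
  have hy : y ≠ 0 := by rintro rfl; simp at hxy
  set θ := angle x y
  have hcos : 0 < Real.cos θ := by
    rw [cos_angle]
    exact div_pos hxy (by positivity)
  have hsin : 0 ≤ Real.sin θ := sin_angle_nonneg x y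
  have hangle : angle (normalize x) (normalize y) = θ := by
    rw [NormedSpace.normalize, NormedSpace.normalize, angle_smul_left_of_pos _ _ (by positivity),
      angle_smul_right_of_pos _ _ (by positivity)]
  have hsq : ‖normalize x - normalize y‖ ^ 2 = 2 - 2 * Real.cos θ := by
    rw [sq, norm_sub_sq_eq_norm_sq_add_norm_sq_sub_two_mul_norm_mul_norm_mul_cos_angle, hangle,
      norm_normalize hx, norm_normalize hy]
    ring
  rw [Real.tan_eq_sin_div_cos, le_div_iff₀ hcos]
  -- `(2 - 2 cos θ) cos² θ ≤ 1 - cos² θ = sin² θ`, as `(1 - cos θ)² (2 cos θ + 1) ≥ 0`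
  have hsq_le : (‖normalize x - normalize y‖ * Real.cos θ) ^ 2 ≤ Real.sin θ ^ 2 := by
    rw [mul_pow, hsq, Real.sin_sq]
    nlinarith [mul_nonneg (sq_nonneg (1 - Real.cos θ)) hcos.le]
  exact (pow_le_pow_iff_left₀ (by positivity) hsin two_ne_zero).1 hsq_le

theorem span_singleton_normalize (x : V) : ℝ ∙ normalize x = ℝ ∙ x := by
  rcases eq_or_ne x 0 with rfl | hx
  · simp
  · exact Submodule.span_singleton_smul_eq (by simpa using hx) x

/-- The paper's rotation of a flat induced by `u - o` has direction
`rotatedDirection D (normalize (Proj u - o)) (normalize (u - o))`. -/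
noncomputable def rotatedDirection (D : Submodule ℝ V) (w w' : V) : Submodule ℝ V :=
  (ℝ ∙ w') ⊔ (D ⊓ (ℝ ∙ w)ᗮ)

theorem add_inner_smul_sub_mem_rotatedDirection {D : Submodule ℝ V} {w x : V} (hw : w ∈ D)
    (hw1 : ‖w‖ = 1) (hx : x ∈ D) (w' : V) :
    x + ⟪x, w⟫ • (w' - w) ∈ rotatedDirection D w w' := by
  rw [show x + ⟪x, w⟫ • (w' - w) = ⟪x, w⟫ • w' + (x - ⟪x, w⟫ • w) by module]
  refine Submodule.add_mem_sup (Submodule.smul_mem _ _ (Submodule.mem_span_singleton_self w'))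
    ⟨D.sub_mem hx (D.smul_mem _ hw), ?_⟩
  change _ ∈ (ℝ ∙ w)ᗮ
  rw [Submodule.mem_orthogonal_singleton_iff_inner_right, inner_sub_right, real_inner_smul_right,
    real_inner_self_eq_norm_sq, hw1, real_inner_comm]
  ring

theorem infDist_mk'_rotatedDirection_le (F : AffineSubspace ℝ V)
    [F.direction.HasOrthogonalProjection] {o w : V} (ho : o ∈ F) (hw : w ∈ F.direction)
    (hw1 : ‖w‖ = 1) (w' p : V) :
    infDist p (AffineSubspace.mk' o (rotatedDirection F.direction w w') : Set V)
      ≤ infDist p (F : Set V) + |⟪p - o, w⟫| * ‖w' - w‖ := by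
  have : Nonempty F := ⟨⟨o, ho⟩⟩
  set q : V := (EuclideanGeometry.orthogonalProjection F p : V)
  have hqo : q - o ∈ F.direction :=
    AffineSubspace.vsub_mem_direction (EuclideanGeometry.orthogonalProjection_mem p) ho
  have hpq : ⟪p - q, w⟫ = 0 := Submodule.inner_left_of_mem_orthogonal hw
    (EuclideanGeometry.vsub_orthogonalProjection_mem_direction_orthogonal F p)
  have hcoord : ⟪q - o, w⟫ = ⟪p - o, w⟫ := by
    rw [← sub_add_sub_cancel p q o, inner_add_left, hpq, zero_add]
  have hmem :
      q + ⟪p - o, w⟫ • (w' - w) ∈ AffineSubspace.mk' o (rotatedDirection F.direction w w') := by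
    rw [AffineSubspace.mem_mk', vsub_eq_sub, add_sub_right_comm, ← hcoord]
    exact add_inner_smul_sub_mem_rotatedDirection hw hw1 hqo w'
  calc infDist p (AffineSubspace.mk' o (rotatedDirection F.direction w w') : Set V)
      ≤ dist p (q + ⟪p - o, w⟫ • (w' - w)) := infDist_le_dist_of_mem hmem
    _ ≤ dist p q + dist q (q + ⟪p - o, w⟫ • (w' - w)) := dist_triangle _ _ _
    _ = infDist p (F : Set V) + |⟪p - o, w⟫| * ‖w' - w‖ := by
      rw [EuclideanGeometry.dist_orthogonalProjection_eq_infDist, dist_self_add_right, norm_smul,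
        Real.norm_eq_abs]

end Rotation

section LpMean

variable {α : Type*} (P : Finset α) (τ : ℕ)

noncomputable def lpMean (f : α → ℝ) : ℝ :=
  ((∑ x ∈ P, f x ^ τ) / P.card) ^ ((1 : ℝ) / τ)

variable {P τ} {f g : α → ℝ}

theorem lpMean_mono (hf : ∀ x ∈ P, 0 ≤ f x) (hfg : ∀ x ∈ P, f x ≤ g x) :
    lpMean P τ f ≤ lpMean P τ g :=
  Real.rpow_le_rpow (div_nonneg (sum_nonneg fun x hx => pow_nonneg (hf x hx) τ) P.card.cast_nonneg)
    (div_le_div_of_nonneg_right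
      (sum_le_sum fun x hx => pow_le_pow_left₀ (hf x hx) (hfg x hx) τ) P.card.cast_nonneg)
    (by positivity)

theorem lpMean_eq_div (hf : ∀ x ∈ P, 0 ≤ f x) :
    lpMean P τ f = (∑ x ∈ P, f x ^ τ) ^ ((1 : ℝ) / τ) / (P.card : ℝ) ^ ((1 : ℝ) / τ) :=
  Real.div_rpow (sum_nonneg fun x hx => pow_nonneg (hf x hx) τ) P.card.cast_nonneg _

theorem lpMean_add_le (hτ : 1 ≤ τ) (hf : ∀ x ∈ P, 0 ≤ f x) (hg : ∀ x ∈ P, 0 ≤ g x) :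
    lpMean P τ (f + g) ≤ lpMean P τ f + lpMean P τ g := by
  have minkowski := Real.Lp_add_le_of_nonneg P (p := τ) (by exact_mod_cast hτ) hf hg
  simp only [Real.rpow_natCast] at minkowski
  rw [lpMean_eq_div (f := f + g) fun x hx => add_nonneg (hf x hx) (hg x hx), lpMean_eq_div hf,
    lpMean_eq_div hg, ← add_div]
  exact div_le_div_of_nonneg_right minkowski (by positivity)

theorem lpMean_mul_const (hτ : τ ≠ 0) (hf : ∀ x ∈ P, 0 ≤ f x) {c : ℝ} (hc : 0 ≤ c) :
    lpMean P τ (fun x => f x * c) = lpMean P τ f * c := by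
  simp only [lpMean, mul_pow, ← sum_mul, mul_div_right_comm]
  rw [Real.mul_rpow (div_nonneg (sum_nonneg fun x hx => pow_nonneg (hf x hx) τ)
      P.card.cast_nonneg) (by positivity), ← Real.rpow_natCast, ← Real.rpow_mul hc,
    mul_one_div_cancel (by exact_mod_cast hτ), Real.rpow_one]

theorem lpMean_le_add_mul (hτ : 1 ≤ τ) {f' : α → ℝ} (hf' : ∀ x ∈ P, 0 ≤ f' x)
    (hf : ∀ x ∈ P, 0 ≤ f x) (hg : ∀ x ∈ P, 0 ≤ g x) {c : ℝ} (hc : 0 ≤ c)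
    (hle : ∀ x ∈ P, f' x ≤ f x + g x * c) :
    lpMean P τ f' ≤ lpMean P τ f + lpMean P τ g * c :=
  calc lpMean P τ f' ≤ lpMean P τ (f + fun x => g x * c) := lpMean_mono hf' hle
    _ ≤ lpMean P τ f + lpMean P τ (fun x => g x * c) :=
      lpMean_add_le hτ hf fun x hx => mul_nonneg (hg x hx) hc
    _ = lpMean P τ f + lpMean P τ g * c := by rw [lpMean_mul_const (by omega) hg hc]

end LpMean

theorem ltau_delta_rotation_lemma_general (d : ℕ) (τ : ℕ) (hτ : 1 ≤ τ)
    (P : Finset (EuclideanSpace ℝ (Fin d)))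
    (F : AffineSubspace ℝ (EuclideanSpace ℝ (Fin d)))
    (o : EuclideanSpace ℝ (Fin d)) (ho : o ∈ F)
    (u pu : EuclideanSpace ℝ (Fin d)) (hpu : pu ∈ F)
    (hproj : ∀ v ∈ F.direction, ⟪u - pu, v⟫ = 0)
    (hne : pu ≠ o)
    (Δ : ℝ) (h : ℝ)
    (hh : h = ((∑ p ∈ P, |⟪p - o, ‖pu - o‖⁻¹ • (pu - o)⟫| ^ τ) / P.card) ^ ((1 : ℝ) / τ))
    (hhpos : 0 < h)
    (htan : Real.tan (InnerProductGeometry.angle (u - o) (pu - o)) ≤ Δ / h)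
    (F' : AffineSubspace ℝ (EuclideanSpace ℝ (Fin d)))
    (hF' : F' = AffineSubspace.mk' o
      (Submodule.span ℝ {u - o} ⊔ (F.direction ⊓ (Submodule.span ℝ {pu - o})ᗮ))) :
    ((∑ p ∈ P, infDist p (F' : Set (EuclideanSpace ℝ (Fin d))) ^ τ) / P.card) ^ ((1 : ℝ) / τ)
      ≤ ((∑ p ∈ P, infDist p (F : Set (EuclideanSpace ℝ (Fin d))) ^ τ) / P.card) ^ ((1 : ℝ) / τ)
        + Δ := by
  have hpuo : pu - o ∈ F.direction := AffineSubspace.vsub_mem_direction hpu ho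
  have hacute : 0 < ⟪u - o, pu - o⟫ := by
    rw [← sub_add_sub_cancel u pu o, inner_add_left, hproj _ hpuo, zero_add,
      real_inner_self_eq_norm_sq]
    exact pow_pos (norm_pos_iff.2 (sub_ne_zero.2 hne)) 2
  set c := ‖normalize (u - o) - normalize (pu - o)‖
  have hc0 : 0 ≤ c := norm_nonneg _
  have hc : c * h ≤ Δ :=
    (le_div_iff₀ hhpos).1 ((norm_normalize_sub_normalize_le_tan_angle_s11 hacute).trans htan)
  have hF'rot : F' = AffineSubspace.mk' o
      (rotatedDirection F.direction (normalize (pu - o)) (normalize (u - o))) := by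
    rw [hF', rotatedDirection, span_singleton_normalize, span_singleton_normalize]
  have hpoint (p) :
      infDist p (F' : Set _) ≤ infDist p (F : Set _) + |⟪p - o, normalize (pu - o)⟫| * c :=
    hF'rot ▸ infDist_mk'_rotatedDirection_le F ho (F.direction.smul_mem _ hpuo)
      (norm_normalize (sub_ne_zero.2 hne)) _ p
  change h = lpMean P τ (fun p => |⟪p - o, normalize (pu - o)⟫|) at hh
  change lpMean P τ (fun p => infDist p F') ≤ lpMean P τ (fun p => infDist p F) + Δ
  calc lpMean P τ (fun p => infDist p F')
      ≤ lpMean P τ (fun p => infDist p F) + h * c := by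
        rw [hh]
        exact lpMean_le_add_mul hτ (fun _ _ => infDist_nonneg) (fun _ _ => infDist_nonneg)
          (fun _ _ => abs_nonneg _) hc0 fun p _ => hpoint p
    _ ≤ lpMean P τ (fun p => infDist p F) + Δ := by linarith

/-- `L_τ` sense Δ-rotation lemma: with `F` a `j`-flat through `o`, `pu` the
orthogonal projection of `u` onto `F` (distinct from `o`),
`u_p = |⟪p-o,(pu-o)/‖pu-o‖⟫|`, `h = ((1/|P|)Σ u_p^τ)^{1/τ}`, and `F'` the
rotation of `F` induced by `u - o` with angle `θ` satisfying `tan θ ≤ Δ/h`,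
one has `((1/|P|)Σ dist(p,F')^τ)^{1/τ} ≤ ((1/|P|)Σ dist(p,F)^τ)^{1/τ} + Δ`. -/
theorem ltau_delta_rotation_lemma (d j : ℕ) (τ : ℕ) (hτ : 1 ≤ τ)
    (P : Finset (EuclideanSpace ℝ (Fin d))) (hP : P.Nonempty)
    (F : AffineSubspace ℝ (EuclideanSpace ℝ (Fin d)))
    (hFdim : Module.finrank ℝ F.direction = j)
    (o : EuclideanSpace ℝ (Fin d)) (ho : o ∈ F)
    (u pu : EuclideanSpace ℝ (Fin d)) (hpu : pu ∈ F)
    (hproj : ∀ v ∈ F.direction, ⟪u - pu, v⟫ = 0)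
    (hne : pu ≠ o)
    (Δ : ℝ) (hΔ : 0 < Δ) (h : ℝ)
    (hh : h = ((∑ p ∈ P, |⟪p - o, ‖pu - o‖⁻¹ • (pu - o)⟫| ^ τ) / P.card) ^ ((1 : ℝ) / τ))
    (hhpos : 0 < h)
    (htan : Real.tan (InnerProductGeometry.angle (u - o) (pu - o)) ≤ Δ / h)
    (F' : AffineSubspace ℝ (EuclideanSpace ℝ (Fin d)))
    (hF' : F' = AffineSubspace.mk' o
      (Submodule.span ℝ {u - o} ⊔ (F.direction ⊓ (Submodule.span ℝ {pu - o})ᗮ))) :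
    ((∑ p ∈ P, infDist p (F' : Set (EuclideanSpace ℝ (Fin d))) ^ τ) / P.card) ^ ((1 : ℝ) / τ)
      ≤ ((∑ p ∈ P, infDist p (F : Set (EuclideanSpace ℝ (Fin d))) ^ τ) / P.card) ^ ((1 : ℝ) / τ)
        + Δ :=
  ltau_delta_rotation_lemma_general d τ hτ P F o ho u pu hpu hproj hne Δ h hh hhpos htan F' hF'
end

section
/- Let π, o ∈ R^d, a ≥ 0, ε, η > 0, and α₁ ∈ [0, 1]. Suppose v, w ∈ R^d satisfy ||v - π|| ≤ √(ε/η)·a and ||w - π|| ≤ √(2ε/η)·a. Then ||v - o|| + 2α₁·||w - o|| ≤ √((1 + 2√2)²·ε/η + 9) · √(a² + ||π - o||²). -/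
/-- Deterministic inequality at the heart of Claim 1 of the symmetric sampling
theorem: if `‖v - π‖ ≤ √(ε/η)·a` and `‖w - π‖ ≤ √(2ε/η)·a`, then
`‖v - o‖ + 2α₁‖w - o‖ ≤ √((1+2√2)² ε/η + 9) · √(a² + ‖π - o‖²)`. -/
theorem symmetric_sampling_claim1_bound (d : ℕ)
    (π o v w : EuclideanSpace ℝ (Fin d)) (a ε η α₁ : ℝ)
    (ha : 0 ≤ a) (hε : 0 < ε) (hη : 0 < η) (hα₁0 : 0 ≤ α₁) (hα₁1 : α₁ ≤ 1)
    (hv : ‖v - π‖ ≤ Real.sqrt (ε / η) * a)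
    (hw : ‖w - π‖ ≤ Real.sqrt (2 * ε / η) * a) :
    ‖v - o‖ + 2 * α₁ * ‖w - o‖
      ≤ Real.sqrt ((1 + 2 * Real.sqrt 2) ^ 2 * ε / η + 9)
        * Real.sqrt (a ^ 2 + ‖π - o‖ ^ 2) := by
  set p := ‖π - o‖ with hpdef
  have hp : 0 ≤ p := norm_nonneg _
  set s := Real.sqrt (ε / η) with hsdef
  have hs0 : 0 ≤ s := Real.sqrt_nonneg _
  have hs2 : s ^ 2 = ε / η := Real.sq_sqrt (by positivity)
  have h2 : Real.sqrt (2 * ε / η) = Real.sqrt 2 * s := by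
    rw [hsdef, ← Real.sqrt_mul (by norm_num : (0:ℝ) ≤ 2)]
    ring_nf
  have hr2 : (0:ℝ) ≤ Real.sqrt 2 := Real.sqrt_nonneg _
  have hr2sq : Real.sqrt 2 ^ 2 = 2 := Real.sq_sqrt (by norm_num)
  -- triangle inequalities
  have hvo : ‖v - o‖ ≤ s * a + p := by
    calc ‖v - o‖ ≤ ‖v - π‖ + ‖π - o‖ := norm_sub_le_norm_sub_add_norm_sub _ _ _
    _ ≤ s * a + p := by rw [hpdef]; linarith
  have hwo : ‖w - o‖ ≤ Real.sqrt 2 * s * a + p := by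
    calc ‖w - o‖ ≤ ‖w - π‖ + ‖π - o‖ := norm_sub_le_norm_sub_add_norm_sub _ _ _
    _ ≤ Real.sqrt 2 * s * a + p := by rw [h2] at hw; rw [hpdef]; linarith
  have hwo0 : 0 ≤ ‖w - o‖ := norm_nonneg _
  have step1 : ‖v - o‖ + 2 * α₁ * ‖w - o‖ ≤ (1 + 2 * Real.sqrt 2) * s * a + 3 * p := by
    have h2w : 2 * α₁ * ‖w - o‖ ≤ 2 * (Real.sqrt 2 * s * a + p) := by
      have : 2 * α₁ * ‖w - o‖ ≤ 2 * 1 * ‖w - o‖ := by nlinarith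
      nlinarith
    nlinarith
  refine step1.trans ?_
  -- Cauchy-Schwarz step: c*a + 3*p ≤ √(c²+9)·√(a²+p²) with c = (1+2√2)s
  set c := (1 + 2 * Real.sqrt 2) * s with hcdef
  have hc0 : 0 ≤ c := by positivity
  have key : c * a + 3 * p ≤ Real.sqrt (c ^ 2 + 9) * Real.sqrt (a ^ 2 + p ^ 2) := by
    rw [← Real.sqrt_mul (by positivity)]
    have hnn : 0 ≤ c * a + 3 * p := by positivity
    rw [← Real.sqrt_sq hnn]
    apply Real.sqrt_le_sqrt
    nlinarith [sq_nonneg (3 * a - c * p)]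
  have hcsq : c ^ 2 = (1 + 2 * Real.sqrt 2) ^ 2 * (ε / η) := by
    rw [hcdef, mul_pow, hs2]
  calc c * a + 3 * p ≤ Real.sqrt (c ^ 2 + 9) * Real.sqrt (a ^ 2 + p ^ 2) := key
  _ = Real.sqrt ((1 + 2 * Real.sqrt 2) ^ 2 * ε / η + 9) * Real.sqrt (a ^ 2 + p ^ 2) := by
      rw [hcsq]; ring_nf
end
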